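/- arXiv:2203.03593 — 7 statements merged into one kernel-verified Lean document; each statement's English description precedes it below -/
import Mathlib

section
/- Let M = (m_0, …, m_{n−1}) be a non-decreasing sequence of nonnegative integers with m_0 = 0, m_1 = 1, such that every term m_h ≥ 2 equals m_i + m_j for some 0 < i ≤ j < h. Then for each positive integer h ≤ n−1, either m_h = 2^{h−1} or m_h ≤ 3·2^{h−3}; moreover, if m_h = 2^{h−1} then m_k = 2^{k−1} for all 1 ≤ k ≤ h. -/
/-- If `(m 0, …, m (n-1))` is non-decreasing, `m 0 = 0`, `m 1 = 1`, and every term `≥ 2`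
is a sum of two earlier positive-indexed terms, then for each `1 ≤ h ≤ n - 1` either
`m h = 2 ^ (h - 1)` or `m h ≤ 3 * 2 ^ (h - 3)`; moreover if `m h = 2 ^ (h - 1)` then
`m k = 2 ^ (k - 1)` for all `1 ≤ k ≤ h`. -/
theorem charSeq_dichotomy (n : ℕ) (m : ℕ → ℕ) (hn : 2 ≤ n)
    (h0 : m 0 = 0) (h1 : m 1 = 1)
    (hmono : ∀ i j : ℕ, i ≤ j → j ≤ n - 1 → m i ≤ m j)
    (hdec : ∀ h : ℕ, h ≤ n - 1 → 2 ≤ m h →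
      ∃ i j : ℕ, 0 < i ∧ i ≤ j ∧ j < h ∧ m h = m i + m j) :
    ∀ h : ℕ, 1 ≤ h → h ≤ n - 1 →
      (m h = 2 ^ (h - 1) ∨ m h ≤ 3 * 2 ^ (h - 3)) ∧
      (m h = 2 ^ (h - 1) → ∀ k : ℕ, 1 ≤ k → k ≤ h → m k = 2 ^ (k - 1)) := by
  -- upper bound: m h ≤ 2^(h-1)
  have hub : ∀ h : ℕ, 1 ≤ h → h ≤ n - 1 → m h ≤ 2 ^ (h - 1) := by
    intro h
    induction h using Nat.strong_induction_on with
    | _ h ih =>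
      intro hh1 hle
      by_cases h2 : 2 ≤ m h
      · obtain ⟨i, j, hi, hij, hjh, heq⟩ := hdec h hle h2
        have hj1 : 1 ≤ j := le_trans hi hij
        have hjn : j ≤ n - 1 := by omega
        have hmi : m i ≤ m j := hmono i j hij hjn
        have hmj : m j ≤ 2 ^ (j - 1) := ih j hjh hj1 hjn
        have hpow : 2 ^ (j - 1) + 2 ^ (j - 1) ≤ 2 ^ (h - 1) := by
          have he : 2 ^ (j - 1) + 2 ^ (j - 1) = 2 ^ ((j - 1) + 1) := by ring
          rw [he]
          exact Nat.pow_le_pow_right (by norm_num) (by omega)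
        omega
      · have : 1 ≤ 2 ^ (h - 1) := Nat.one_le_two_pow
        omega
  intro h
  induction h using Nat.strong_induction_on with
  | _ h ih =>
    intro hh1 hle
    have mor : m h = 2 ^ (h - 1) → ∀ k : ℕ, 1 ≤ k → k ≤ h → m k = 2 ^ (k - 1) := by
      intro hmh k hk1 hkh
      rcases eq_or_lt_of_le hkh with rfl | hkh'
      · exact hmh
      · have hh2 : 2 ≤ h := by omega
        have h2m : 2 ≤ m h := by
          rw [hmh]
          calc (2:ℕ) = 2 ^ 1 := by norm_num
            _ ≤ 2 ^ (h - 1) := Nat.pow_le_pow_right (by norm_num) (by omega)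
        obtain ⟨i, j, hi, hij, hjh, heq⟩ := hdec h hle h2m
        have hj1 : 1 ≤ j := le_trans hi hij
        have hjn : j ≤ n - 1 := by omega
        have hmi : m i ≤ m j := hmono i j hij hjn
        have hmj : m j ≤ 2 ^ (j - 1) := hub j hj1 hjn
        have hle2 : 2 ^ (h - 1) ≤ 2 ^ j := by
          have he : 2 ^ (j - 1) + 2 ^ (j - 1) = 2 ^ ((j - 1) + 1) := by ring
          have he2 : (j - 1) + 1 = j := by omega
          rw [he2] at he
          omega
        have hjeq : j = h - 1 := by
          have := (Nat.pow_le_pow_iff_right (by norm_num : 1 < 2)).mp hle2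
          omega
        subst hjeq
        have hpow2 : 2 ^ (h - 1) = 2 ^ (h - 2) + 2 ^ (h - 2) := by
          have he : 2 ^ (h - 2) + 2 ^ (h - 2) = 2 ^ ((h - 2) + 1) := by ring
          rw [he]
          congr 1 <;> omega
        have hmj2 : m (h - 1) ≤ 2 ^ (h - 2) := by
          have : 2 ^ (h - 1 - 1) = 2 ^ (h - 2) := by congr 1 <;> omega
          omega
        have hmjE : m (h - 1) = 2 ^ (h - 1 - 1) := by
          have : 2 ^ (h - 1 - 1) = 2 ^ (h - 2) := by congr 1 <;> omega
          omega
        exact (ih (h - 1) (by omega) (by omega) (by omega)).2 hmjE k hk1 (by omega)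
    refine ⟨?_, mor⟩
    by_cases hcase : m h = 2 ^ (h - 1)
    · exact Or.inl hcase
    · right
      have hub' : m h ≤ 2 ^ (h - 1) := hub h hh1 hle
      by_cases h4 : h ≤ 3
      · have hb : 2 ^ (h - 1) ≤ 4 := by interval_cases h <;> norm_num
        have h30 : h - 3 = 0 := by omega
        rw [h30]
        omega
      · push_neg at h4
        obtain ⟨t, rfl⟩ : ∃ t, h = t + 4 := ⟨h - 4, by omega⟩
        have hg : t + 4 - 3 = t + 1 := by omega
        rw [hg]
        by_cases h2m : 2 ≤ m (t + 4)
        · obtain ⟨i, j, hi, hij, hjh, heq⟩ := hdec (t + 4) hle h2m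
          have hj1 : 1 ≤ j := le_trans hi hij
          have hjn : j ≤ n - 1 := by omega
          have hmi : m i ≤ m j := hmono i j hij hjn
          by_cases hjtop : j = t + 3
          · subst hjtop
            obtain ⟨hd, hm⟩ := ih (t + 3) (by omega) (by omega) (by omega)
            have e1 : t + 3 - 1 = t + 2 := by omega
            have e2 : t + 3 - 3 = t := by omega
            rw [e1, e2] at hd
            rcases hd with hp | hb
            · have hmiE : m i = 2 ^ (i - 1) := by
                have := hm (by rw [hp]; congr 1 <;> omega) i hi (by omega)
                exact this
              have hsplit : 2 ^ (t + 4 - 1) = 2 ^ (t + 2) + 2 ^ (t + 2) := by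
                have he : t + 4 - 1 = (t + 2) + 1 := by omega
                rw [he]; ring
              have hlt' : 2 ^ (i - 1) < 2 ^ (t + 2) := by
                have hlt : m (t + 4) < 2 ^ (t + 4 - 1) := lt_of_le_of_ne hub' hcase
                omega
              have hile : i - 1 ≤ t + 1 := by
                by_contra hc
                push_neg at hc
                have := Nat.pow_le_pow_right (by norm_num : 1 ≤ 2) (show t + 2 ≤ i - 1 by omega)
                omega
              have h2i : 2 ^ (i - 1) ≤ 2 ^ (t + 1) := Nat.pow_le_pow_right (by norm_num) hile
              have hfin : 2 ^ (t + 1) + 2 ^ (t + 2) = 3 * 2 ^ (t + 1) := by ring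
              omega
            · have hfin : 3 * 2 ^ t + 3 * 2 ^ t = 3 * 2 ^ (t + 1) := by ring
              omega
          · have hj2 : j ≤ t + 2 := by omega
            have hmj : m j ≤ 2 ^ (j - 1) := hub j hj1 hjn
            have h2j : 2 ^ (j - 1) ≤ 2 ^ (t + 1) := Nat.pow_le_pow_right (by norm_num) (by omega)
            have hfin : 2 ^ (t + 1) + 2 ^ (t + 1) ≤ 3 * 2 ^ (t + 1) := by
              have : 1 ≤ 2 ^ (t + 1) := Nat.one_le_two_pow
              omega
            omega
        · have : 1 ≤ 2 ^ (t + 1) := Nat.one_le_two_pow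
          omega
end

section
/- Call a finite sequence M = (m_0, …, m_{n−1}) of nonnegative integers proto-characteristic if: m_0 = 0; there is k_1 with 1 ≤ k_1 ≤ n−1 such that m_1 = … = m_{k_1} = 1 and m_{k_1+1} > 1 if k_1 < n−1; M is non-decreasing; and (if k_1 < n−1) there exist functions t_1, t_2 : {k_1+1,…,n−1} → {1,…,n−1} with m_{t_1(k)} + m_{t_2(k)} = m_k, t_1(k), t_2(k) < k for all k, and for all k_1 < h_1 < h_2 < n at least one of t_1(h_1) < t_1(h_2) or t_2(h_1) < t_2(h_2) holds. Theorem: if (m_0,…,m_{n−1}) is proto-characteristic, then so is (0, 1, m_1, …, m_{n−1}) (a sequence of length n+1). -/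
/-- A sequence `(m 0, …, m (n-1))` of nonnegative integers is proto-characteristic if:
`m 0 = 0`; there is `k₁` with `1 ≤ k₁ ≤ n - 1`, `m 1 = … = m k₁ = 1` and `m (k₁+1) > 1`
if `k₁ < n - 1`; the sequence is non-decreasing; and (if `k₁ < n - 1`) there are
functions `t₁, t₂ : {k₁+1,…,n-1} → {1,…,n-1}` with `m (t₁ k) + m (t₂ k) = m k`,
`t₁ k, t₂ k < k`, and for `k₁ < h₁ < h₂ < n` at least one of `t₁ h₁ < t₁ h₂`,
`t₂ h₁ < t₂ h₂` holds. -/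
def ProtoChar (n : ℕ) (m : ℕ → ℕ) : Prop :=
  2 ≤ n ∧ m 0 = 0 ∧
  ∃ k₁ : ℕ, 1 ≤ k₁ ∧ k₁ ≤ n - 1 ∧ (∀ i : ℕ, 1 ≤ i → i ≤ k₁ → m i = 1) ∧
    (k₁ < n - 1 → 1 < m (k₁ + 1)) ∧
    (∀ i j : ℕ, i ≤ j → j ≤ n - 1 → m i ≤ m j) ∧
    (k₁ < n - 1 → ∃ t₁ t₂ : ℕ → ℕ,
      (∀ k : ℕ, k₁ < k → k < n →
        1 ≤ t₁ k ∧ t₁ k ≤ n - 1 ∧ 1 ≤ t₂ k ∧ t₂ k ≤ n - 1 ∧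
        m (t₁ k) + m (t₂ k) = m k ∧ t₁ k < k ∧ t₂ k < k) ∧
      (∀ h₁ h₂ : ℕ, k₁ < h₁ → h₁ < h₂ → h₂ < n → t₁ h₁ < t₁ h₂ ∨ t₂ h₁ < t₂ h₂))

def insertOne (m : ℕ → ℕ) (i : ℕ) : ℕ :=
  if i = 0 then 0 else if i = 1 then 1 else m (i - 1)

section insertOne

variable {m : ℕ → ℕ}

theorem insertOne_zero : insertOne m 0 = 0 := rfl

theorem insertOne_of_two_le {i : ℕ} (hi : 2 ≤ i) : insertOne m i = m (i - 1) := by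
  simp only [insertOne, if_neg (show i ≠ 0 by omega), if_neg (show i ≠ 1 by omega)]

theorem insertOne_succ {i : ℕ} (hi : i ≠ 0) : insertOne m (i + 1) = m i :=
  insertOne_of_two_le (by omega)

theorem insertOne_of_ne_zero (hm1 : m 1 = 1) {i : ℕ} (hi : i ≠ 0) :
    insertOne m i = m (max 1 (i - 1)) := by
  rcases (show i = 1 ∨ 2 ≤ i by omega) with rfl | hi2
  · simpa [insertOne] using hm1.symm
  · rw [insertOne_of_two_le hi2, max_eq_right (by omega)]

theorem insertOne_eq_one {k : ℕ} (hones : ∀ i, 1 ≤ i → i ≤ k → m i = 1) {i : ℕ}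
    (hi : 1 ≤ i) (hik : i ≤ k + 1) : insertOne m i = 1 := by
  rcases (show i = 1 ∨ 2 ≤ i by omega) with rfl | hi2
  · rfl
  · rw [insertOne_of_two_le hi2]
    exact hones _ (by omega) (by omega)

theorem insertOne_le_insertOne {N : ℕ} (hm1 : m 1 = 1)
    (hmono : ∀ i j, i ≤ j → j ≤ N → m i ≤ m j) {i j : ℕ} (hij : i ≤ j) (hj : j ≤ N + 1) :
    insertOne m i ≤ insertOne m j := by
  rcases Nat.eq_zero_or_pos i with rfl | hi
  · exact Nat.zero_le _
  rcases hij.eq_or_lt with rfl | hlt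
  · rfl
  · rw [insertOne_of_ne_zero hm1 hi.ne', insertOne_of_ne_zero hm1 (by omega)]
    exact hmono _ _ (by omega) (by omega)

end insertOne

/-- Inserting a 1 after the initial 0 of a proto-characteristic sequence of length
`n` yields a proto-characteristic sequence of length `n + 1`:
`(0, 1, m 1, …, m (n-1))` is proto-characteristic. -/
theorem protoChar_insert_one (n : ℕ) (m : ℕ → ℕ) (h : ProtoChar n m) :
    ProtoChar (n + 1) (fun i => if i = 0 then 0 else if i = 1 then 1 else m (i - 1)) := by
  obtain ⟨hn, -, k₁, hk₁, hk₁n, hones, hgt, hmono, hrec⟩ := h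
  have hm1 : m 1 = 1 := hones 1 le_rfl hk₁
  refine ⟨by omega, insertOne_zero, k₁ + 1, by omega, by omega,
    fun i => insertOne_eq_one hones, fun hk => ?_,
    fun i j hij hj => insertOne_le_insertOne hm1 hmono hij (by omega), fun hk => ?_⟩
  · change 1 < insertOne m (k₁ + 1 + 1)
    rw [insertOne_succ (by omega)]
    exact hgt (by omega)
  -- The decompositions of `m` are shifted by one index, together with the sequence.
  obtain ⟨t₁, t₂, ht, hsep⟩ := hrec (by omega)
  refine ⟨fun k => t₁ (k - 1) + 1, fun k => t₂ (k - 1) + 1, fun k hk₁k hkn => ?_,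
    fun h₁ h₂ hh₁ hh₁₂ hh₂ => ?_⟩
  · obtain ⟨ht₁, ht₁n, ht₂, ht₂n, hsum, ht₁k, ht₂k⟩ := ht (k - 1) (by omega) (by omega)
    dsimp only
    refine ⟨by omega, by omega, by omega, by omega, ?_, by omega, by omega⟩
    change insertOne m _ + insertOne m _ = insertOne m k
    rw [insertOne_succ (by omega), insertOne_succ (by omega), insertOne_of_two_le (by omega)]
    exact hsum
  · have := hsep (h₁ - 1) (h₂ - 1) (by omega) (by omega) (by omega)
    dsimp only
    omega
end

section
/- If (m_0, …, m_{n−1}) is a proto-characteristic sequence, then (m_0, m_1, …, m_{n−1}, 2·m_{n−1}) is also proto-characteristic. -/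
/-- Appending `2 * m (n-1)` to a proto-characteristic sequence of length `n` yields a
proto-characteristic sequence of length `n + 1`. -/
theorem protoChar_append_double (n : ℕ) (m : ℕ → ℕ) (h : ProtoChar n m) :
    ProtoChar (n + 1) (fun i => if i = n then 2 * m (n - 1) else m i) := by
  obtain ⟨hn, h0, k₁, hk1, hkn, hones, hgt, hmono, hstep⟩ := h
  refine ⟨by omega, by simp only []; rw [if_neg (by omega)]; exact h0,
    k₁, hk1, by omega, ?_, ?_, ?_, ?_⟩
  · intro i h1 h2
    simp only []
    rw [if_neg (by omega)]
    exact hones i h1 h2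
  · intro hlt
    simp only []
    by_cases hc : k₁ + 1 = n
    · rw [if_pos hc]
      have : m (n - 1) = 1 := hones (n - 1) (by omega) (by omega)
      omega
    · rw [if_neg hc]
      exact hgt (by omega)
  · intro i j hij hjn
    simp only []
    have hmn1 : ∀ i, i ≤ n - 1 → m i ≤ m (n - 1) := fun i hi => hmono i (n - 1) hi le_rfl
    by_cases hj : j = n
    · by_cases hi : i = n
      · rw [if_pos hj, if_pos hi]
      · rw [if_pos hj, if_neg hi]
        have := hmn1 i (by omega)
        omega
    · rw [if_neg hj, if_neg (by omega)]
      exact hmono i j hij (by omega)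
  · intro _
    set m' : ℕ → ℕ := fun i => if i = n then 2 * m (n - 1) else m i with hm'
    have hm'lt : ∀ i, i < n → m' i = m i := by
      intro i hi; simp only [hm']; rw [if_neg (by omega)]
    have hm'n : m' n = 2 * m (n - 1) := by simp [hm']
    by_cases hc : k₁ < n - 1
    · obtain ⟨t₁, t₂, hb, hinc⟩ := hstep hc
      refine ⟨fun k => if k = n then n - 1 else t₁ k,
              fun k => if k = n then n - 1 else t₂ k, ?_, ?_⟩
      · intro k hk1k hkn1
        by_cases hk : k = n
        · subst hk
          simp only [eq_self_iff_true, if_true]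
          rw [hm'n, hm'lt (k - 1) (by omega)]
          exact ⟨by omega, by omega, by omega, by omega, by ring, by omega, by omega⟩
        · obtain ⟨b1, b2, b3, b4, b5, b6, b7⟩ := hb k hk1k (by omega)
          simp only [if_neg hk]
          rw [hm'lt (t₁ k) (by omega), hm'lt (t₂ k) (by omega), hm'lt k (by omega)]
          exact ⟨b1, by omega, b3, by omega, b5, b6, b7⟩
      · intro h₁ h₂ hkh hhh hhn
        by_cases hk2 : h₂ = n
        · left
          simp only [if_neg (show ¬ h₁ = n by omega), if_pos hk2]
          have := (hb h₁ hkh (by omega)).2.2.2.2.2.1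
          omega
        · simp only [if_neg (show ¬ h₁ = n by omega), if_neg hk2]
          exact hinc h₁ h₂ hkh hhh (by omega)
    · refine ⟨fun _ => n - 1, fun _ => n - 1, ?_, ?_⟩
      · intro k hk1k hkn1
        have hk : k = n := by omega
        subst hk
        simp only
        rw [hm'n, hm'lt (k - 1) (by omega)]
        have h1 : m (k - 1) = 1 := hones (k - 1) (by omega) (by omega)
        exact ⟨by omega, by omega, by omega, by omega, by ring, by omega, by omega⟩
      · intro h₁ h₂ hkh hhh hhn
        omega
end

section
/- If (m_0, …, m_{n−1}) is a proto-characteristic sequence, then (m_0, m_1, …, m_{n−1}, m_{n−1} + 1) is also proto-characteristic. -/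
/-- Appending `m (n-1) + 1` to a proto-characteristic sequence of length `n` yields a
proto-characteristic sequence of length `n + 1`. -/
theorem protoChar_append_succ (n : ℕ) (m : ℕ → ℕ) (h : ProtoChar n m) :
    ProtoChar (n + 1) (fun i => if i = n then m (n - 1) + 1 else m i) := by
  obtain ⟨hn, h0, k₁, hk1, hk2, hones, hgt, hmono, hT⟩ := h
  refine ⟨by omega, by simp only [show (0:ℕ) ≠ n by omega, if_false]; exact h0,
    k₁, hk1, by omega, ?_, ?_, ?_, ?_⟩
  · intro i hi1 hi2
    simp only [show i ≠ n by omega, if_false]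
    exact hones i hi1 hi2
  · intro _
    by_cases hk : k₁ < n - 1
    · simp only [show k₁ + 1 ≠ n by omega, if_false]
      exact hgt hk
    · have h1 := hones (n - 1) (by omega) (by omega)
      simp only [if_pos (show k₁ + 1 = n by omega)]
      omega
  · intro i j hij hjn
    by_cases hj : j = n
    · by_cases hi : i = n
      · simp only [if_pos hi, if_pos hj]
        exact le_rfl
      · simp only [if_neg hi, if_pos hj]
        have := hmono i (n - 1) (by omega) le_rfl
        omega
    · have hi : i ≠ n := by omega
      simp only [hi, hj, if_false]
      exact hmono i j hij (by omega)
  · intro _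
    by_cases hk : k₁ < n - 1
    · obtain ⟨t₁, t₂, ht, hcross⟩ := hT hk
      refine ⟨fun k => if k = n then n - 1 else t₁ k,
              fun k => if k = n then k₁ else t₂ k, ?_, ?_⟩
      · intro k hk1k hkn
        by_cases hkeq : k = n
        · have h1 := hones k₁ hk1 le_rfl
          simp only [if_pos hkeq, show n - 1 ≠ n by omega, show k₁ ≠ n by omega, if_false]
          exact ⟨by omega, by omega, by omega, by omega, by omega, by omega, by omega⟩
        · obtain ⟨a1, a2, a3, a4, a5, a6, a7⟩ := ht k hk1k (by omega)
          simp only [hkeq, if_false, show t₁ k ≠ n by omega, show t₂ k ≠ n by omega]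
          exact ⟨a1, by omega, a3, by omega, a5, a6, a7⟩
      · intro h₁ h₂ hh1 hh2 hh3
        by_cases he2 : h₂ = n
        · have he1 : h₁ ≠ n := by omega
          have := (ht h₁ hh1 (by omega)).2.2.2.2.2.1
          left
          simp only [he1, if_false, if_pos he2]
          omega
        · have he1 : h₁ ≠ n := by omega
          simp only [he1, he2, if_false]
          exact hcross h₁ h₂ hh1 hh2 (by omega)
    · refine ⟨fun _ => n - 1, fun _ => n - 1, ?_, ?_⟩
      · intro k hk1k hkn'
        have hkeq : k = n := by omega
        have h1 := hones (n - 1) (by omega) (by omega)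
        simp only [show n - 1 ≠ n by omega, if_false, if_pos hkeq]
        exact ⟨by omega, by omega, by omega, by omega, by omega, by omega, by omega⟩
      · intro h₁ h₂ hh1 hh2 hh3
        omega
end

section
/- Let (m_0, …, m_{n−1}) be a proto-characteristic sequence with n > 4, satisfying additionally m_h ≤ 2^{h−1} for all 1 ≤ h ≤ n−1 and the property that if m_h = 2^{h−1} then m_k = 2^{k−1} for all k ≤ h. If m_h > 2^{h−2} for some h ∈ {4, …, n−1}, then m_h = 2^{h−2} + 2^q for some q ∈ {0, …, h−2}. -/
/-!
A term `m h > 2 ^ (h - 2)` is a sum `m a + m b` of earlier terms, so by monotonicity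
`m (h - 1) > 2 ^ (h - 3)` and, inductively, `m (h - 1) = 2 ^ (h - 3) + 2 ^ p`.
If `p = h - 3` then `m (h - 1)` is maximal, all earlier terms are powers of two and one of the
two summands must be `2 ^ (h - 2)`. Otherwise every term of index `≤ h - 3` is too small to
be a summand, so `{a, b} ⊆ {h - 2, h - 1}`; `a = b = h - 1` gives `q = p + 1`, and the case
`a = h - 2, b = h - 1` is settled by the induction hypothesis for `m (h - 2)`, because `2 ^ r + 2 ^ p > 2 ^ (h - 4)`
with `r, p ≤ h - 4` forces one of `r, p` to be `h - 4`.
-/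

theorem eq_or_eq_of_two_pow_lt_two_pow_add_two_pow {j r p : ℕ} (hr : r ≤ j) (hp : p ≤ j)
    (h : 2 ^ j < 2 ^ r + 2 ^ p) : r = j ∨ p = j := by
  by_contra! hne
  have hr' : 2 ^ (r + 1) ≤ 2 ^ j := Nat.pow_le_pow_right two_pos (by omega)
  have hp' : 2 ^ (p + 1) ≤ 2 ^ j := Nat.pow_le_pow_right two_pos (by omega)
  rw [pow_succ] at hr' hp'
  omega

def IsAdditionChainUpTo (N : ℕ) (m : ℕ → ℕ) : Prop :=
  ∀ k ≤ N, 1 < m k → ∃ a b, 1 ≤ a ∧ a < k ∧ 1 ≤ b ∧ b < k ∧ m a + m b = m k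

theorem ProtoChar.isAdditionChainUpTo {n : ℕ} {m : ℕ → ℕ} (hM : ProtoChar n m) :
    IsAdditionChainUpTo (n - 1) m := by
  obtain ⟨-, hm₀, k₁, hk₁, -, hones, -, -, hsplit⟩ := hM
  intro k hk hmk
  have hk₁k : k₁ < k := by
    by_contra! hle
    have : k ≠ 0 := by rintro rfl; omega
    have := hones k (by omega) hle
    omega
  obtain ⟨t₁, t₂, ht, -⟩ := hsplit (by omega)
  obtain ⟨h₁, -, h₂, -, hsum, hlt₁, hlt₂⟩ := ht k hk₁k (by omega)
  exact ⟨t₁ k, t₂ k, h₁, hlt₁, h₂, hlt₂, hsum⟩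

theorem ProtoChar.mono {n : ℕ} {m : ℕ → ℕ} (hM : ProtoChar n m) :
    ∀ i j, i ≤ j → j ≤ n - 1 → m i ≤ m j := by
  obtain ⟨-, -, -, -, -, -, -, hmono, -⟩ := hM
  exact hmono

namespace IsAdditionChainUpTo

variable {N : ℕ} {m : ℕ → ℕ}

theorem le_two_mul (hm : IsAdditionChainUpTo N m)
    (hmono : ∀ i j, i ≤ j → j ≤ N → m i ≤ m j) {k : ℕ} (hk : k + 1 ≤ N) (h1 : 1 < m (k + 1)) :
    m (k + 1) ≤ 2 * m k := by
  obtain ⟨a, b, -, ha, -, hb, hab⟩ := hm (k + 1) hk h1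
  have := hmono a k (by omega) (by omega)
  have := hmono b k (by omega) (by omega)
  omega

theorem exists_eq_two_pow_add_two_pow_of_pred_eq (hm : IsAdditionChainUpTo N m)
    (hmax : ∀ h : ℕ, 1 ≤ h → h ≤ N → m h = 2 ^ (h - 1) →
      ∀ k : ℕ, 1 ≤ k → k ≤ h → m k = 2 ^ (k - 1))
    {j : ℕ} (hj : j + 2 ≤ N) (hpred : m (j + 1) = 2 ^ j) (hlt : 2 ^ j < m (j + 2)) :
    ∃ q ≤ j, m (j + 2) = 2 ^ j + 2 ^ q := by
  obtain ⟨a, b, ha₁, ha, hb₁, hb, hab⟩ := hm (j + 2) hj (lt_of_le_of_lt (Nat.one_le_two_pow) hlt)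
  have hpow := hmax (j + 1) (by omega) (by omega) hpred
  rw [hpow a ha₁ (by omega), hpow b hb₁ (by omega)] at hab
  rcases eq_or_eq_of_two_pow_lt_two_pow_add_two_pow (by omega) (by omega) (hab ▸ hlt) with h | h
  · exact ⟨b - 1, by omega, by rw [← hab, h]⟩
  · exact ⟨a - 1, by omega, by rw [← hab, h, add_comm]⟩

theorem exists_eq_two_pow_add_two_pow_of_pred_lt (hm : IsAdditionChainUpTo N m)
    (hmono : ∀ i j, i ≤ j → j ≤ N → m i ≤ m j)
    (hbound : ∀ h : ℕ, 1 ≤ h → h ≤ N → m h ≤ 2 ^ (h - 1))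
    {i p : ℕ} (hi : i + 4 ≤ N) (hp : p ≤ i) (hpred : m (i + 3) = 2 ^ (i + 1) + 2 ^ p)
    (hprev : 2 ^ i < m (i + 2) → ∃ r ≤ i, m (i + 2) = 2 ^ i + 2 ^ r)
    (hlt : 2 ^ (i + 2) < m (i + 4)) :
    ∃ q ≤ i + 2, m (i + 4) = 2 ^ (i + 2) + 2 ^ q := by
  have e₁ : 2 ^ (i + 1) = 2 * 2 ^ i := by ring
  have e₂ : 2 ^ (i + 2) = 4 * 2 ^ i := by ring
  have hpi : 2 ^ p ≤ 2 ^ i := Nat.pow_le_pow_right two_pos hp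
  have hsmall : ∀ t, 1 ≤ t → t ≤ i + 1 → m t ≤ 2 ^ i := fun t ht₁ ht =>
    (hbound t ht₁ (by omega)).trans (Nat.pow_le_pow_right two_pos (by omega))
  have hi2 : m (i + 2) ≤ 2 ^ (i + 1) := hbound (i + 2) (by omega) (by omega)
  obtain ⟨a, b, ha₁, ha, hb₁, hb, hab⟩ := hm (i + 4) hi (lt_of_le_of_lt Nat.one_le_two_pow hlt)
  have hma := hmono a (i + 3) (by omega) (by omega)
  have hmb := hmono b (i + 3) (by omega) (by omega)
  have hai : i + 2 ≤ a := by
    by_contra! h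
    have := hsmall a ha₁ (by omega)
    omega
  have hbi : i + 2 ≤ b := by
    by_contra! h
    have := hsmall b hb₁ (by omega)
    omega
  have hcases : m (i + 4) = m (i + 2) + m (i + 3) ∨ m (i + 4) = m (i + 3) + m (i + 3) := by
    rcases (by omega : a = i + 2 ∨ a = i + 3) with rfl | rfl <;>
      rcases (by omega : b = i + 2 ∨ b = i + 3) with rfl | rfl <;> omega
  rcases hcases with hsum | hsum
  · obtain ⟨r, hr, hr'⟩ := hprev (by omega)
    rcases eq_or_eq_of_two_pow_lt_two_pow_add_two_pow hr hp (by omega) with rfl | rfl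
    · exact ⟨p, by omega, by omega⟩
    · exact ⟨r, by omega, by omega⟩
  · exact ⟨p + 1, by omega, by rw [pow_succ]; omega⟩

theorem exists_eq_two_pow_add_two_pow (hm : IsAdditionChainUpTo N m)
    (hmono : ∀ i j, i ≤ j → j ≤ N → m i ≤ m j)
    (hbound : ∀ h : ℕ, 1 ≤ h → h ≤ N → m h ≤ 2 ^ (h - 1))
    (hmax : ∀ h : ℕ, 1 ≤ h → h ≤ N → m h = 2 ^ (h - 1) →
      ∀ k : ℕ, 1 ≤ k → k ≤ h → m k = 2 ^ (k - 1))
    (j : ℕ) (hj : j + 2 ≤ N) (hlt : 2 ^ j < m (j + 2)) :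
    ∃ q ≤ j, m (j + 2) = 2 ^ j + 2 ^ q := by
  induction j using Nat.strong_induction_on with
  | _ j ih =>
  rcases j with _ | j
  · have := hbound 2 (by omega) hj
    exact ⟨0, le_rfl, by simp at hlt this ⊢; omega⟩
  have hpred : 2 ^ j < m (j + 2) := by
    have hdouble : m (j + 1 + 2) ≤ 2 * m (j + 2) :=
      hm.le_two_mul hmono hj (lt_of_le_of_lt Nat.one_le_two_pow hlt)
    rw [pow_succ] at hlt
    omega
  obtain ⟨p, hp, hp'⟩ := ih j (by omega) (by omega) hpred
  rcases hp.lt_or_eq with hp | rfl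
  · obtain ⟨i, rfl⟩ : ∃ i, j = i + 1 := ⟨j - 1, by omega⟩
    exact hm.exists_eq_two_pow_add_two_pow_of_pred_lt hmono hbound hj (by omega) hp'
      (ih i (by omega) (by omega)) hlt
  · exact hm.exists_eq_two_pow_add_two_pow_of_pred_eq hmax hj (by rw [hp', ← two_mul, pow_succ']) hlt

end IsAdditionChainUpTo

theorem protoChar_large_term_general (n : ℕ) (m : ℕ → ℕ) (hM : ProtoChar n m)
    (hbound : ∀ h : ℕ, 1 ≤ h → h ≤ n - 1 → m h ≤ 2 ^ (h - 1))
    (hmax : ∀ h : ℕ, 1 ≤ h → h ≤ n - 1 → m h = 2 ^ (h - 1) →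
      ∀ k : ℕ, 1 ≤ k → k ≤ h → m k = 2 ^ (k - 1)) :
    ∀ h : ℕ, 4 ≤ h → h ≤ n - 1 → 2 ^ (h - 2) < m h →
      ∃ q : ℕ, q ≤ h - 2 ∧ m h = 2 ^ (h - 2) + 2 ^ q := by
  intro h h4 hn hlt
  obtain ⟨j, rfl⟩ : ∃ j, h = j + 2 := ⟨h - 2, by omega⟩
  simpa using hM.isAdditionChainUpTo.exists_eq_two_pow_add_two_pow hM.mono hbound hmax j
    hn (by simpa using hlt)

/-- Large terms of a proto-characteristic sequence (with the standard bounds) are of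
the form `2 ^ (h-2) + 2 ^ q`: if `n > 4`, `m h ≤ 2 ^ (h-1)` for `1 ≤ h ≤ n - 1`,
`m h = 2 ^ (h-1)` forces `m k = 2 ^ (k-1)` for all `k ≤ h`, and `m h > 2 ^ (h-2)`
for some `4 ≤ h ≤ n - 1`, then `m h = 2 ^ (h-2) + 2 ^ q` for some `q ≤ h - 2`. -/
theorem protoChar_large_term (n : ℕ) (m : ℕ → ℕ) (hn : 4 < n) (hM : ProtoChar n m)
    (hbound : ∀ h : ℕ, 1 ≤ h → h ≤ n - 1 → m h ≤ 2 ^ (h - 1))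
    (hmax : ∀ h : ℕ, 1 ≤ h → h ≤ n - 1 → m h = 2 ^ (h - 1) →
      ∀ k : ℕ, 1 ≤ k → k ≤ h → m k = 2 ^ (k - 1)) :
    ∀ h : ℕ, 4 ≤ h → h ≤ n - 1 → 2 ^ (h - 2) < m h →
      ∃ q : ℕ, q ≤ h - 2 ∧ m h = 2 ^ (h - 2) + 2 ^ q :=
  protoChar_large_term_general n m hM hbound hmax
end

section
/- Let n and k be integers with n > k > 1, and let l be a positive integer such that l < 2^{n−k} and the binary expansion of l contains at most k ones. Then there exists a proto-characteristic sequence of length n (i.e. indexed 0 to n−1) whose last term equals l. -/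
/-!
Reading the binary expansion of `l` from the top, `l` is reached from `1` by doubling at each
further digit and adding one after each further digit `1`; this takes
`(#digits - 1) + (#ones - 1) ≤ n - 2` steps. Prepending `0` and enough `1`s gives a sequence of
length `n` in which every term after the run of `1`s is `m (j - 1) + m (j - 1)` or
`m 1 + m (j - 1)`; taking `t₁ j = j - 1` makes the monotonicity condition on `t₁, t₂` automatic.
-/

lemma protoChar_of_double_or_succ {n k₁ : ℕ} {m : ℕ → ℕ} (hk₁ : 1 ≤ k₁) (hk₁n : k₁ < n)
    (h0 : m 0 = 0) (hone : ∀ i, 1 ≤ i → i ≤ k₁ → m i = 1)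
    (hstep : ∀ i, k₁ ≤ i → i + 1 < n → m (i + 1) = 2 * m i ∨ m (i + 1) = m i + 1) :
    ProtoChar n m := by
  have hsucc : ∀ i, i + 1 < n → m i ≤ m (i + 1) := by
    intro i hi
    rcases Nat.lt_or_ge i k₁ with hik | hik
    · rcases Nat.eq_zero_or_pos i with rfl | hi0
      · omega
      · rw [hone i hi0 hik.le, hone (i + 1) (by omega) hik]
    · rcases hstep i hik hi with h | h <;> omega
  have hmono : ∀ i j, i ≤ j → j ≤ n - 1 → m i ≤ m j := by
    intro i j hij
    induction j, hij using Nat.le_induction with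
    | base => exact fun _ => le_rfl
    | succ j _ ih => exact fun hj => (ih (by omega)).trans (hsucc j (by omega))
  refine ⟨by omega, h0, k₁, hk₁, by omega, hone, fun hlt => ?_, hmono, fun _ => ?_⟩
  · have h := hstep k₁ le_rfl (by omega)
    rw [hone k₁ hk₁ le_rfl] at h
    omega
  refine ⟨fun j => j - 1, fun j => if m j = 2 * m (j - 1) then j - 1 else 1,
    fun j hj hjn => ?_, fun h₁ h₂ _ _ _ => Or.inl (show h₁ - 1 < h₂ - 1 by omega)⟩
  have hm1 := hone 1 le_rfl hk₁
  have hmj := hstep (j - 1) (by omega) (by omega)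
  rw [Nat.sub_add_cancel (by omega : 1 ≤ j)] at hmj
  dsimp only
  split_ifs <;> omega

def ReachableByDoubleOrSucc (N l : ℕ) : Prop :=
  ∃ c : ℕ → ℕ, c 0 = 1 ∧ (∀ j < N, c (j + 1) = 2 * c j ∨ c (j + 1) = c j + 1) ∧ c N = l

namespace ReachableByDoubleOrSucc

lemma zero : ReachableByDoubleOrSucc 0 1 :=
  ⟨fun _ => 1, rfl, fun _ h => absurd h (Nat.not_lt_zero _), rfl⟩

lemma step {N a b : ℕ} (h : ReachableByDoubleOrSucc N a) (hb : b = 2 * a ∨ b = a + 1) :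
    ReachableByDoubleOrSucc (N + 1) b := by
  obtain ⟨c, hc0, hstep, hcN⟩ := h
  refine ⟨fun j => if j ≤ N then c j else b, by simp [hc0], fun j hj => ?_, by simp⟩
  rcases Nat.lt_or_ge j N with hjN | hjN
  · simpa [hjN.le, Nat.succ_le_of_lt hjN] using hstep j hjN
  · obtain rfl : j = N := by omega
    simpa [hcN] using hb

lemma of_digits (l : ℕ) (hl : 0 < l) :
    ∃ N, N + 2 = (Nat.digits 2 l).length + (Nat.digits 2 l).count 1 ∧
      ReachableByDoubleOrSucc N l := by
  induction l using Nat.strong_induction_on with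
  | _ l ih =>
    rcases Nat.lt_or_ge l 2 with hl2 | hl2
    · obtain rfl : l = 1 := by omega
      exact ⟨0, by simp, zero⟩
    obtain ⟨N, hN, hreach⟩ := ih (l / 2) (by omega) (by omega)
    rcases Nat.mod_two_eq_zero_or_one l with h | h <;>
      rw [Nat.digits_def' one_lt_two hl, h, List.length_cons]
    · rw [List.count_cons_of_ne zero_ne_one]
      exact ⟨N + 1, by omega, hreach.step (by omega)⟩
    · rw [List.count_cons_self]
      exact ⟨N + 2, by omega, (hreach.step (b := l - 1) (by omega)).step (by omega)⟩

lemma exists_protoChar {n N l : ℕ} (h : ReachableByDoubleOrSucc N l)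
    (hN : N + 2 ≤ n) : ∃ m : ℕ → ℕ, ProtoChar n m ∧ m (n - 1) = l := by
  obtain ⟨c, hc0, hstep, hcN⟩ := h
  obtain ⟨k₁, hk₁⟩ : ∃ k₁, k₁ + N + 1 = n := ⟨n - 1 - N, by omega⟩
  refine ⟨fun i => if i < k₁ then min i 1 else c (i - k₁), ?_, ?_⟩
  · refine protoChar_of_double_or_succ (k₁ := k₁) (by omega) (by omega) (if_pos (by omega))
      (fun i hi hik => ?_) (fun i hik hin => ?_)
    · rcases Nat.lt_or_ge i k₁ with h | h
      · rw [if_pos h]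
        omega
      · obtain rfl : i = k₁ := by omega
        rw [if_neg (lt_irrefl i), Nat.sub_self, hc0]
    · have hsub : i + 1 - k₁ = i - k₁ + 1 := by omega
      rw [if_neg (by omega), if_neg (by omega), hsub]
      exact hstep (i - k₁) (by omega)
  · simp only [if_neg (show ¬ n - 1 < k₁ by omega), show n - 1 - k₁ = N by omega, hcN]

end ReachableByDoubleOrSucc

theorem protoChar_of_binary_general (n k l : ℕ) (hkn : k < n)
    (hl : 0 < l) (hlt : l < 2 ^ (n - k))
    (hones : (Nat.digits 2 l).count 1 ≤ k) :
    ∃ m : ℕ → ℕ, ProtoChar n m ∧ m (n - 1) = l := by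
  have hlen : (Nat.digits 2 l).length ≤ n - k := (Nat.digits_length_le_iff one_lt_two l).mpr hlt
  obtain ⟨N, hN, hreach⟩ := ReachableByDoubleOrSucc.of_digits l hl
  exact hreach.exists_protoChar (by omega)

/-- If `n > k > 1`, `l` is positive, `l < 2 ^ (n-k)` and the binary expansion of `l`
contains at most `k` ones, then there is a proto-characteristic sequence of length `n`
whose last term is `l`. -/
theorem protoChar_of_binary (n k l : ℕ) (hk : 1 < k) (hkn : k < n)
    (hl : 0 < l) (hlt : l < 2 ^ (n - k))
    (hones : (Nat.digits 2 l).count 1 ≤ k) :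
    ∃ m : ℕ → ℕ, ProtoChar n m ∧ m (n - 1) = l :=
  protoChar_of_binary_general n k l hkn hl hlt hones
end

section
/- Let A be a unital F-algebra of dimension n > 2 possessing a long basis E = {e_0 = 1, e_1, …, e_{n−1}} (meaning e_i^2 = e_{i+1} for i = 1, …, n−2) such that e_p e_q ∈ span{e_0, …, e_{max(p,q)}} for all p ≠ q. Then A has length l(A) = 2^{n−2}. -/
/-- Words in a generating set `S` of a unital not necessarily associative algebra:
`IsWord S k a` means `a` is (the value of) a word of length `k` in `S`.
The unit is the word of length `0`. -/
inductive IsWord {A : Type*} [NonAssocRing A] (S : Set A) : ℕ → A → Prop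
  | one : IsWord S 0 1
  | gen : ∀ a ∈ S, IsWord S 1 a
  | mul : ∀ {p q : ℕ} {u v : A}, IsWord S p u → IsWord S q v →
      0 < p → 0 < q → IsWord S (p + q) (u * v)

/-- `Lk F S k` is the linear span of all words in `S` of length at most `k`. -/
def Lk (F : Type*) {A : Type*} [Field F] [NonAssocRing A] [Module F A]
    (S : Set A) (k : ℕ) : Submodule F A :=
  Submodule.span F {a : A | ∃ j ≤ k, IsWord S j a}

/-- `S` generates the algebra `A`. -/
def Generates (F : Type*) {A : Type*} [Field F] [NonAssocRing A] [Module F A]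
    (S : Set A) : Prop :=
  ∃ k, Lk F S k = ⊤

/-- The length of a generating set. -/
noncomputable def genLength (F : Type*) {A : Type*} [Field F] [NonAssocRing A] [Module F A]
    (S : Set A) : ℕ :=
  sInf {k | Lk F S k = ⊤}

/-- `HasAlgLength F A l` : the length of the algebra `A` is `l`, i.e. `l` is the maximum
of the lengths of finite generating sets of `A`. -/
def HasAlgLength (F A : Type*) [Field F] [NonAssocRing A] [Module F A]
    [SMulCommClass F A A] [IsScalarTower F A A] (l : ℕ) : Prop :=
  (∃ S : Set A, S.Finite ∧ Generates F S ∧ genLength F S = l) ∧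
  ∀ S : Set A, S.Finite → Generates F S → genLength F S ≤ l


/-!
Upper bound: for a generating set `S` and `k ≥ 1`, `L_{2k}(S) = L_k(S)` would make `L_k(S)` closed
under multiplication, hence equal to `A`. So the dimensions of `L_1 ⊊ L_2 ⊊ L_4 ⊊ ⋯` increase
strictly until `A` is reached, and as `dim L_1 ≥ 2` (otherwise `L_1 = F·1` is a subalgebra), we
get `L_{2^(n-2)}(S) = A`.

Lower bound: take `S = {e 1}`, so that `e j` is a word of length `2^(j-1)`. Give `e j` the
weight `2^(j-1)` (and `e 0 = 1` the weight `0`). The triangularity of the products and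
`e i * e i = e (i+1)` show that the span of the basis vectors of weight `≤ p` times that of
weight `≤ q` lies in the span of weight `≤ p + q`, so `L_k(S)` misses `e (n-1)` for
`k < 2^(n-2)`.
-/

section Words

variable {F A : Type*} [Field F] [NonAssocRing A] [Module F A] {S : Set A}

theorem IsWord.eq_one_of_zero {a : A} (h : IsWord S 0 a) : a = 1 := by
  generalize hk : 0 = k at h
  cases h <;> first | rfl | omega

theorem Lk_mono : Monotone (Lk F S) :=
  fun _ _ hkm => Submodule.span_mono fun _ ⟨j, hj, hw⟩ => ⟨j, hj.trans hkm, hw⟩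

theorem IsWord.mem_Lk {j k : ℕ} {a : A} (h : IsWord S j a) (hjk : j ≤ k) : a ∈ Lk F S k :=
  Submodule.subset_span ⟨j, hjk, h⟩

theorem one_mem_Lk (k : ℕ) : (1 : A) ∈ Lk F S k :=
  IsWord.one.mem_Lk k.zero_le

theorem Lk_le_of_mul_mem {P : Submodule F A} (hS : S ⊆ P) (h1 : (1 : A) ∈ P)
    (hmul : ∀ u ∈ P, ∀ v ∈ P, u * v ∈ P) (k : ℕ) : Lk F S k ≤ P := by
  refine Submodule.span_le.2 ?_
  rintro a ⟨j, -, hw⟩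
  induction hw with
  | one => exact h1
  | gen a ha => exact hS ha
  | mul _ _ _ _ hu hv => exact hmul _ hu _ hv

end Words

section Growth

variable {F A : Type*} [Field F] [NonAssocRing A] [Module F A]
  [SMulCommClass F A A] [IsScalarTower F A A] {S : Set A}

theorem mul_mem_of_mem_span {s t : Set A} {P : Submodule F A} (h : ∀ x ∈ s, ∀ y ∈ t, x * y ∈ P)
    {u v : A} (hu : u ∈ Submodule.span F s) (hv : v ∈ Submodule.span F t) : u * v ∈ P := by
  have huv := Submodule.apply_mem_map₂ (LinearMap.mul F A) hu hv
  rw [Submodule.map₂_span_span] at huv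
  refine Submodule.span_le.2 ?_ huv
  rintro _ ⟨x, hx, y, hy, rfl⟩
  exact h x hx y hy

theorem mul_mem_Lk {p q : ℕ} {u v : A} (hu : u ∈ Lk F S p) (hv : v ∈ Lk F S q) :
    u * v ∈ Lk F S (p + q) := by
  refine mul_mem_of_mem_span ?_ hu hv
  rintro x ⟨i, hip, hx⟩ y ⟨j, hjq, hy⟩
  rcases Nat.eq_zero_or_pos i with rfl | hi
  · rw [hx.eq_one_of_zero, one_mul]
    exact hy.mem_Lk (by omega)
  rcases Nat.eq_zero_or_pos j with rfl | hj
  · rw [hy.eq_one_of_zero, mul_one]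
    exact hx.mem_Lk (by omega)
  exact (hx.mul hy hi hj).mem_Lk (by omega)

theorem Lk_lt_Lk_add_self (hS : Generates F S) {k : ℕ} (hk : 1 ≤ k) (hne : Lk F S k ≠ ⊤) :
    Lk F S k < Lk F S (k + k) := by
  refine (Lk_mono (by omega)).lt_of_ne fun heq => hne ?_
  obtain ⟨K, hK⟩ := hS
  refine top_unique (hK ▸ Lk_le_of_mul_mem ?_ (one_mem_Lk k) ?_ K)
  · exact fun a ha => (IsWord.gen a ha).mem_Lk hk
  · exact fun u hu v hv => heq ▸ mul_mem_Lk hu hv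

variable [FiniteDimensional F A]

theorem two_le_finrank_Lk_one (hS : Generates F S) (hne : Lk F S 1 ≠ ⊤) :
    2 ≤ Module.finrank F (Lk F S 1) := by
  have : Nontrivial A := by
    by_contra h
    rw [not_nontrivial_iff_subsingleton] at h
    exact hne (Subsingleton.elim _ _)
  by_contra! hlt
  have hle : F ∙ (1 : A) ≤ Lk F S 1 := (Submodule.span_singleton_le_iff_mem _ _).2 (one_mem_Lk 1)
  have heq := Submodule.eq_of_le_of_finrank_le hle
    (by rw [finrank_span_singleton one_ne_zero]; omega)
  obtain ⟨K, hK⟩ := hS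
  refine hne (top_unique (hK ▸ heq ▸
    Lk_le_of_mul_mem ?_ (Submodule.mem_span_singleton_self 1) ?_ K))
  · exact fun a ha => heq ▸ (IsWord.gen a ha).mem_Lk le_rfl
  · intro u hu v hv
    obtain ⟨c, rfl⟩ := Submodule.mem_span_singleton.1 hu
    obtain ⟨d, rfl⟩ := Submodule.mem_span_singleton.1 hv
    exact Submodule.mem_span_singleton.2 ⟨c * d, by rw [smul_mul_smul_comm, one_mul]⟩

theorem Lk_two_pow_eq_top_or (hS : Generates F S) (t : ℕ) :
    Lk F S (2 ^ t) = ⊤ ∨ t + 2 ≤ Module.finrank F (Lk F S (2 ^ t)) := by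
  induction t with
  | zero => exact (em _).imp_right (two_le_finrank_Lk_one hS)
  | succ t ih =>
    by_cases htop : Lk F S (2 ^ t) = ⊤
    · exact .inl (top_unique (htop ▸ Lk_mono (Nat.pow_le_pow_right two_pos t.le_succ)))
    · right
      have hlt := Submodule.finrank_lt_finrank_of_lt
        (Lk_lt_Lk_add_self hS Nat.one_le_two_pow htop)
      rw [← two_mul, ← pow_succ'] at hlt
      have := ih.resolve_left htop
      omega

theorem Lk_two_pow_finrank_sub_two_eq_top (hS : Generates F S) :
    Lk F S (2 ^ (Module.finrank F A - 2)) = ⊤ := by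
  refine (Lk_two_pow_eq_top_or hS _).elim id fun h => Submodule.eq_top_of_finrank_eq ?_
  have := Submodule.finrank_le (Lk F S (2 ^ (Module.finrank F A - 2)))
  omega

theorem genLength_le_two_pow_finrank_sub_two (hS : Generates F S) :
    genLength F S ≤ 2 ^ (Module.finrank F A - 2) :=
  Nat.sInf_le (Lk_two_pow_finrank_sub_two_eq_top hS)

end Growth

def longBasisWeight : ℕ → ℕ
  | 0 => 0
  | j + 1 => 2 ^ j

theorem longBasisWeight_mono : Monotone longBasisWeight := by
  rintro (_ | i) (_ | j) hij
  · exact le_rfl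
  · exact Nat.zero_le _
  · omega
  · exact Nat.pow_le_pow_right two_pos (by omega)

theorem longBasisWeight_succ {j : ℕ} (hj : 0 < j) :
    longBasisWeight (j + 1) = longBasisWeight j + longBasisWeight j := by
  obtain ⟨i, rfl⟩ := Nat.exists_eq_add_of_lt hj
  simp only [longBasisWeight, Nat.zero_add, pow_succ, mul_two]

section LongBasis

variable {F A : Type*} [Field F] [NonAssocRing A] [Module F A] {n : ℕ}
  (e : Module.Basis (Fin n) F A)

def IsLongBasis : Prop :=
  ∀ i : Fin n, ∀ (_h1 : 1 ≤ i.val) (_h2 : i.val ≤ n - 2), e i * e i = e ⟨i.val + 1, by omega⟩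

def IsMulFiltered : Prop :=
  ∀ p q : Fin n, p ≠ q →
    e p * e q ∈ Submodule.span F (e '' {j : Fin n | j.val ≤ max p.val q.val})

def weightSpan (k : ℕ) : Submodule F A :=
  Submodule.span F (e '' {j | longBasisWeight j ≤ k})

theorem weightSpan_mono : Monotone (weightSpan e) :=
  fun _ _ hkm => Submodule.span_mono (Set.image_mono fun _ hj => le_trans hj hkm)

theorem basis_mem_weightSpan {j : Fin n} {k : ℕ} (hj : longBasisWeight j ≤ k) :
    e j ∈ weightSpan e k :=
  Submodule.subset_span ⟨j, hj, rfl⟩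

theorem weightSpan_eq_top {k : ℕ} (hk : longBasisWeight (n - 1) ≤ k) : weightSpan e k = ⊤ := by
  rw [eq_top_iff, ← e.span_eq]
  refine Submodule.span_le.2 ?_
  rintro _ ⟨j, rfl⟩
  exact basis_mem_weightSpan e ((longBasisWeight_mono (by omega)).trans hk)

theorem weightSpan_ne_top (h0 : 0 < n) {k : ℕ} (hk : k < longBasisWeight (n - 1)) :
    weightSpan e k ≠ ⊤ := fun htop =>
  e.linearIndependent.notMem_span_image (x := ⟨n - 1, by omega⟩) (by simpa using hk)
    (htop ▸ Submodule.mem_top)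

variable {e}

theorem IsLongBasis.isWord (h1 : 1 < n) (he : IsLongBasis e) :
    ∀ j (hj : j < n), 0 < j → IsWord {e ⟨1, h1⟩} (longBasisWeight j) (e ⟨j, hj⟩)
  | 0, _, hpos => absurd hpos (lt_irrefl 0)
  | 1, _, _ => IsWord.gen _ rfl
  | j + 2, hj, _ => by
    have hw := he.isWord h1 (j + 1) (by omega) (by omega)
    rw [longBasisWeight_succ (by omega), ← he ⟨j + 1, by omega⟩ (by dsimp only; omega)
      (by dsimp only; omega)]
    exact hw.mul hw (by simp [longBasisWeight]) (by simp [longBasisWeight])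

theorem IsLongBasis.Lk_eq_top (h1 : 1 < n) (he0 : e ⟨0, by omega⟩ = 1) (he : IsLongBasis e) :
    Lk F {e ⟨1, h1⟩} (longBasisWeight (n - 1)) = ⊤ := by
  rw [eq_top_iff, ← e.span_eq]
  refine Submodule.span_le.2 ?_
  rintro _ ⟨⟨j, hj⟩, rfl⟩
  rcases Nat.eq_zero_or_pos j with rfl | hpos
  · exact he0 ▸ one_mem_Lk _
  · exact (he.isWord h1 j hj hpos).mem_Lk (longBasisWeight_mono (by omega))

end LongBasis

section LongBasisMul

variable {F A : Type*} [Field F] [NonAssocRing A] [Module F A]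
  [SMulCommClass F A A] [IsScalarTower F A A] {n : ℕ} {e : Module.Basis (Fin n) F A}

theorem mul_mem_weightSpan (h0 : 0 < n) (he0 : e ⟨0, h0⟩ = 1) (he : IsLongBasis e)
    (hmul : IsMulFiltered e) {p q : ℕ} {u v : A} (hu : u ∈ weightSpan e p)
    (hv : v ∈ weightSpan e q) : u * v ∈ weightSpan e (p + q) := by
  refine mul_mem_of_mem_span ?_ hu hv
  rintro _ ⟨i, hi, rfl⟩ _ ⟨j, hj, rfl⟩
  simp only [Set.mem_ofPred_eq] at hi hj
  by_cases hi0 : i.val = 0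
  · rw [show i = ⟨0, h0⟩ from Fin.ext hi0, he0, one_mul]
    exact basis_mem_weightSpan e (by omega)
  by_cases hj0 : j.val = 0
  · rw [show j = ⟨0, h0⟩ from Fin.ext hj0, he0, mul_one]
    exact basis_mem_weightSpan e (by omega)
  by_cases hij : i = j
  · subst hij
    by_cases hlast : i.val ≤ n - 2
    · rw [he i (by omega) hlast]
      exact basis_mem_weightSpan e ((longBasisWeight_succ (by omega)).trans_le (by omega))
    · have hi_last : n - 1 = i.val := by omega
      rw [weightSpan_eq_top e (hi_last ▸ (by omega : longBasisWeight i ≤ p + q))]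
      exact Submodule.mem_top
  · refine Submodule.span_le.2 ?_ (hmul i j hij)
    rintro _ ⟨l, hl, rfl⟩
    refine basis_mem_weightSpan e ((longBasisWeight_mono hl).trans ?_)
    rcases le_total i.val j.val with h | h
    · rw [max_eq_right h]; omega
    · rw [max_eq_left h]; omega

theorem Lk_le_weightSpan (h0 : 0 < n) (he0 : e ⟨0, h0⟩ = 1) (he : IsLongBasis e)
    (hmul : IsMulFiltered e) {S : Set A} (hS : S ⊆ weightSpan e 1) (k : ℕ) :
    Lk F S k ≤ weightSpan e k := by
  refine Submodule.span_le.2 ?_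
  rintro a ⟨j, hjk, hw⟩
  refine weightSpan_mono e hjk ?_
  clear hjk
  induction hw with
  | one => exact he0 ▸ basis_mem_weightSpan e le_rfl
  | gen a ha => exact hS ha
  | mul _ _ _ _ hu hv => exact mul_mem_weightSpan h0 he0 he hmul hu hv

theorem genLength_singleton_basis_one (h1 : 1 < n) (he0 : e ⟨0, by omega⟩ = 1)
    (he : IsLongBasis e) (hmul : IsMulFiltered e) :
    genLength F {e ⟨1, h1⟩} = longBasisWeight (n - 1) := by
  refine IsLeast.csInf_eq ⟨he.Lk_eq_top h1 he0, fun k hk => not_lt.1 fun hlt => ?_⟩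
  have hS : ({e ⟨1, h1⟩} : Set A) ⊆ weightSpan e 1 :=
    Set.singleton_subset_iff.2 (basis_mem_weightSpan e le_rfl)
  exact weightSpan_ne_top e (by omega) hlt
    (top_unique (hk ▸ Lk_le_weightSpan (by omega) he0 he hmul hS k))

end LongBasisMul

/-- A unital `F`-algebra of dimension `n > 2` with a long basis
`e 0 = 1, e 1, …, e (n-1)` (i.e. `e i ^ 2 = e (i+1)` for `1 ≤ i ≤ n - 2`) such that
`e p * e q ∈ span {e 0, …, e (max p q)}` for `p ≠ q` has length `2 ^ (n - 2)`. -/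
theorem length_eq_of_long_basis (F A : Type*) [Field F] [NonAssocRing A]
    [Module F A] [SMulCommClass F A A] [IsScalarTower F A A]
    (n : ℕ) (hn : 2 < n) (e : Module.Basis (Fin n) F A)
    (he0 : e ⟨0, by omega⟩ = 1)
    (hsq : ∀ i : Fin n, ∀ (_h1 : 1 ≤ i.val) (_h2 : i.val ≤ n - 2),
      e i * e i = e ⟨i.val + 1, by omega⟩)
    (hspan : ∀ p q : Fin n, p ≠ q →
      e p * e q ∈ Submodule.span F (e '' {j : Fin n | j.val ≤ max p.val q.val})) :
    HasAlgLength F A (2 ^ (n - 2)) := by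
  have hrank : Module.finrank F A = n := by
    rw [Module.finrank_eq_card_basis e, Fintype.card_fin]
  have hweight : longBasisWeight (n - 1) = 2 ^ (n - 2) := by
    obtain ⟨m, rfl⟩ : ∃ m, n = m + 2 := ⟨n - 2, by omega⟩
    rfl
  have : FiniteDimensional F A := e.finiteDimensional_of_finite
  refine ⟨⟨{e ⟨1, by omega⟩}, Set.finite_singleton _, ?_, ?_⟩, fun S _ hS => ?_⟩
  · exact ⟨_, IsLongBasis.Lk_eq_top (by omega) he0 hsq⟩
  · rw [genLength_singleton_basis_one (by omega) he0 hsq hspan, hweight]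
  · exact hrank ▸ genLength_le_two_pow_finrank_sub_two hS
end
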